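/- arXiv:1705.00531 — 3 statements merged into one kernel-verified Lean document; each statement's English description precedes it below -/
import Mathlib

section
/- Let P be a set of primes such that the sum of reciprocals of elements of P diverges. Then the set A = {n ∈ ℕ : for all p ∈ P, if p divides n then p² divides n} has natural density zero. -/
/-!
For a finite set `S` of primes, whether `p ∣ n → p² ∣ n` holds for every `p ∈ S` depends only
on `n` modulo `M = ∏ p²`, and by the Chinese remainder theorem at most `∏ (p² - p + 1)` residues
modulo `M` do. Hence the upper density of `A` is at most
`∏_{p ∈ S} (1 - (p - 1) / p²) ≤ exp (-½ ∑_{p ∈ S} 1 / p)`, which divergence makes arbitrarily small.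
-/

open Filter Finset
open scoped Function

def IsPowerfulAt (s : Set ℕ) (n : ℕ) : Prop := ∀ p ∈ s, p ∣ n → p ^ 2 ∣ n

theorem IsPowerfulAt.mono {s t : Set ℕ} {n : ℕ} (hst : s ⊆ t) (h : IsPowerfulAt t n) :
    IsPowerfulAt s n :=
  fun p hp => h p (hst hp)

theorem isPowerfulAt_periodic (S : Finset ℕ) :
    Function.Periodic (IsPowerfulAt S) (∏ p ∈ S, p ^ 2) := by
  intro n
  have hdvd (p) (hp : p ∈ S) : p ^ 2 ∣ ∏ q ∈ S, q ^ 2 := dvd_prod_of_mem _ hp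
  refine propext (forall₂_congr fun p hp => ?_)
  rw [Nat.dvd_add_left (hdvd p hp),
    Nat.dvd_add_left ((dvd_pow_self p two_ne_zero).trans (hdvd p hp))]

theorem Nat.count_mul_of_periodic {q : ℕ → Prop} [DecidablePred q] {M : ℕ}
    (hq : Function.Periodic q M) (k : ℕ) : Nat.count q (k * M) = k * Nat.count q M := by
  induction k with
  | zero => simp
  | succ k ih =>
    have hshift : (fun j => q (k * M + j)) = q := funext fun j => by
      rw [add_comm]; exact hq.nat_mul k j
    rw [add_mul, one_mul, Nat.count_add, ih]
    simp only [hshift, add_mul, one_mul]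

theorem Nat.ModEq.prod_of_pairwise_coprime {ι : Type*} {s : Finset ι} {f : ι → ℕ}
    (hf : (s : Set ι).Pairwise (Nat.Coprime on f)) {a b : ℕ} (h : ∀ i ∈ s, a ≡ b [MOD f i]) :
    a ≡ b [MOD ∏ i ∈ s, f i] := by
  simp only [Nat.modEq_iff_dvd] at h ⊢
  push_cast
  exact prod_dvd_of_coprime (fun i hi j hj hij => Nat.isCoprime_iff_coprime.2 (hf hi hj hij)) h

theorem card_filter_dvd_imp_sq_dvd_range_sq_le {p : ℕ} (hp : p.Prime) :
    #{r ∈ range (p ^ 2) | p ∣ r → p ^ 2 ∣ r} ≤ p ^ 2 - p + 1 := by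
  have hp2 := hp.two_le
  have hbad : (Icc 1 (p - 1)).image (p * ·) ⊆
      range (p ^ 2) \ ({r ∈ range (p ^ 2) | p ∣ r → p ^ 2 ∣ r} : Finset ℕ) := by
    intro r hr
    obtain ⟨k, hk, rfl⟩ := mem_image.1 hr
    rw [mem_Icc] at hk
    have hlt : p * k < p ^ 2 := by rw [sq]; exact Nat.mul_lt_mul_of_pos_left (by omega) (by omega)
    refine mem_sdiff.2 ⟨mem_range.2 hlt, fun h => ?_⟩
    have hsq : p ^ 2 ∣ p * k := (mem_filter.1 h).2 (dvd_mul_right p k)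
    exact absurd (Nat.le_of_dvd (Nat.mul_pos (by omega) (by omega)) hsq) (by omega)
  have := card_le_card hbad
  rw [card_image_of_injective _ (mul_right_injective₀ hp.ne_zero), Nat.card_Icc,
    card_sdiff_of_subset (filter_subset _ _), card_range] at this
  have := card_le_card (filter_subset (fun r => p ∣ r → p ^ 2 ∣ r) (range (p ^ 2)))
  rw [card_range] at this
  omega

open scoped Classical in
theorem count_isPowerfulAt_prod_sq_le {S : Finset ℕ} (hS : ∀ p ∈ S, p.Prime) :
    Nat.count (IsPowerfulAt S) (∏ p ∈ S, p ^ 2) ≤ ∏ p ∈ S, (p ^ 2 - p + 1) := by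
  rw [Nat.count_eq_card_filter_range]
  calc _ ≤ #(S.pi fun p => {r ∈ range (p ^ 2) | p ∣ r → p ^ 2 ∣ r}) := by
        refine card_le_card_of_injOn (fun n p _ => n % p ^ 2) ?_ ?_
        · intro n hn
          simp only [coe_filter, Set.mem_ofPred_eq, mem_range] at hn
          refine mem_pi.2 fun p hp => mem_filter.2 ⟨mem_range.2 (Nat.mod_lt _ ?_), fun hdvd => ?_⟩
          · exact pow_pos (hS p hp).pos 2
          have hpn : p ∣ n := (Nat.dvd_mod_iff (dvd_pow_self p two_ne_zero)).1 hdvd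
          exact (Nat.dvd_mod_iff dvd_rfl).2 (hn.2 p hp hpn)
        · intro n hn m hm h
          simp only [coe_filter, Set.mem_ofPred_eq, mem_range] at hn hm
          refine Nat.ModEq.eq_of_lt_of_lt ?_ hn.1 hm.1
          refine Nat.ModEq.prod_of_pairwise_coprime (fun p hp q hq hpq => ?_) fun p hp => ?_
          · exact Nat.Coprime.pow 2 2 ((Nat.coprime_primes (hS p hp) (hS q hq)).2 hpq)
          · exact congrFun (congrFun h p) hp
    _ = ∏ p ∈ S, #{r ∈ range (p ^ 2) | p ∣ r → p ^ 2 ∣ r} := card_pi _ _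
    _ ≤ _ := prod_le_prod' fun p hp => card_filter_dvd_imp_sq_dvd_range_sq_le (hS p hp)

theorem sq_sub_add_one_div_sq_le_exp {x : ℝ} (hx : 2 ≤ x) :
    (x ^ 2 - x + 1) / x ^ 2 ≤ Real.exp (-(1 / (2 * x))) := calc
  _ = -((x - 1) / x ^ 2) + 1 := by field_simp; ring
  _ ≤ Real.exp (-((x - 1) / x ^ 2)) := Real.add_one_le_exp _
  _ ≤ _ := Real.exp_le_exp.2 <| neg_le_neg <| by
    rw [div_le_div_iff₀ (by positivity) (by positivity)]; nlinarith

theorem prod_sq_sub_add_one_div_le_exp {S : Finset ℕ} (hS : ∀ p ∈ S, p.Prime) :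
    ((∏ p ∈ S, (p ^ 2 - p + 1) : ℕ) : ℝ) / (∏ p ∈ S, p ^ 2 : ℕ) ≤
      Real.exp (-(∑ p ∈ S, 1 / (p : ℝ)) / 2) := by
  have hcast (p : ℕ) : ((p ^ 2 - p + 1 : ℕ) : ℝ) = (p : ℝ) ^ 2 - p + 1 := by
    rw [Nat.cast_add, Nat.cast_sub (Nat.le_self_pow two_ne_zero p)]; push_cast; ring
  have hexp : -(∑ p ∈ S, 1 / (p : ℝ)) / 2 = ∑ p ∈ S, -(1 / (2 * (p : ℝ))) := by
    rw [neg_div, sum_div, ← sum_neg_distrib]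
    refine sum_congr rfl fun p _ => by ring
  simp only [Nat.cast_prod, hcast, Nat.cast_pow, ← prod_div_distrib, hexp, Real.exp_sum]
  refine prod_le_prod (fun p hp => ?_) fun p hp => sq_sub_add_one_div_sq_le_exp ?_
  · have hp1 : (1 : ℝ) ≤ p := by exact_mod_cast (hS p hp).one_lt.le
    exact div_nonneg (by nlinarith) (by positivity)
  · exact_mod_cast (hS p hp).two_le

theorem exists_finset_subset_prod_sq_sub_add_one_div_lt {P : Set ℕ} (hP : ∀ p ∈ P, p.Prime)
    (hdiv : ¬ Summable (fun p : P => (1 : ℝ) / (p : ℝ))) {ε : ℝ} (hε : 0 < ε) :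
    ∃ S : Finset ℕ, ↑S ⊆ P ∧
      ((∏ p ∈ S, (p ^ 2 - p + 1) : ℕ) : ℝ) / (∏ p ∈ S, p ^ 2 : ℕ) < ε := by
  obtain ⟨u, hu⟩ : ∃ u : Finset P, -2 * Real.log ε < ∑ p ∈ u, (1 : ℝ) / (p : ℝ) := by
    by_contra! h
    exact hdiv (summable_of_sum_le (fun p => by positivity) h)
  have huP : ↑(u.map (Function.Embedding.subtype _)) ⊆ P := by
    simp only [coe_map, Function.Embedding.subtype_apply, Set.image_subset_iff]
    exact fun p _ => p.2
  refine ⟨_, huP, (prod_sq_sub_add_one_div_le_exp fun p hp => hP p (huP hp)).trans_lt ?_⟩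
  calc _ < Real.exp (Real.log ε) := by
        rw [sum_map]
        exact Real.exp_lt_exp.2 (by simp only [Function.Embedding.subtype_apply]; linarith)
    _ = ε := Real.exp_log hε

theorem card_isPowerfulAt_Icc_le {S : Finset ℕ} (hS : ∀ p ∈ S, p.Prime) (N : ℕ) :
    Nat.card ↥({n | IsPowerfulAt S n} ∩ Set.Icc 1 N) ≤
      (N / ∏ p ∈ S, p ^ 2 + 1) * ∏ p ∈ S, (p ^ 2 - p + 1) := by
  classical
  set M := ∏ p ∈ S, p ^ 2
  have hM : 0 < M := prod_pos fun p hp => pow_pos (hS p hp).pos 2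
  calc _ ≤ Nat.card ({n ∈ range (N + 1) | IsPowerfulAt S n} : Finset ℕ) := by
        refine Nat.card_mono (finite_toSet _) fun n ⟨hn, _, hnN⟩ => ?_
        simpa [Nat.lt_succ_iff, hnN] using hn
    _ = Nat.count (IsPowerfulAt S) (N + 1) := by
        rw [Nat.card_eq_finsetCard, Nat.count_eq_card_filter_range]
    _ ≤ Nat.count (IsPowerfulAt S) ((N / M + 1) * M) :=
        Nat.count_monotone _ (by rw [add_mul, one_mul]; exact Nat.lt_div_mul_add hM)
    _ = (N / M + 1) * Nat.count (IsPowerfulAt S) M :=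
        Nat.count_mul_of_periodic (isPowerfulAt_periodic S) _
    _ ≤ _ := Nat.mul_le_mul_left _ (count_isPowerfulAt_prod_sq_le hS)

theorem Nat.cast_div_add_one_mul_div_le (K M N : ℕ) :
    (((N / M + 1) * K : ℕ) : ℝ) / N ≤ K / M + K / N := by
  rcases N.eq_zero_or_pos with rfl | hN
  · simp only [CharP.cast_eq_zero, div_zero]
    positivity
  push_cast
  rw [add_mul, one_mul, add_div]
  refine add_le_add_left ?_ _
  calc ((N / M : ℕ) : ℝ) * K / N ≤ (N / M : ℝ) * K / N := by gcongr; exact Nat.cast_div_le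
    _ = K / M := by field_simp

theorem density_zero_of_divergent_primes
    (P : Set ℕ) (hP : ∀ p ∈ P, Nat.Prime p)
    (hdiv : ¬ Summable (fun p : P => (1 : ℝ) / (p : ℝ)))
    (A : Set ℕ) (hA : A = {n : ℕ | ∀ p ∈ P, p ∣ n → p ^ 2 ∣ n}) :
    Tendsto (fun N : ℕ => (Nat.card ↥(A ∩ Set.Icc 1 N) : ℝ) / N) atTop (nhds 0) := by
  refine tendsto_order.2 ⟨fun a ha => Eventually.of_forall fun N => ha.trans_le (by positivity),
    fun ε hε => ?_⟩
  obtain ⟨S, hSP, hS⟩ := exists_finset_subset_prod_sq_sub_add_one_div_lt hP hdiv (half_pos hε)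
  set K := ∏ p ∈ S, (p ^ 2 - p + 1)
  have hAS (N : ℕ) : A ∩ Set.Icc 1 N ⊆ {n | IsPowerfulAt S n} ∩ Set.Icc 1 N := by
    subst hA
    exact Set.inter_subset_inter_left _ fun n hn => IsPowerfulAt.mono hSP hn
  have hKN : Tendsto (fun N : ℕ => (K : ℝ) / N) atTop (nhds 0) :=
    tendsto_const_nhds.div_atTop tendsto_natCast_atTop_atTop
  filter_upwards [hKN.eventually (gt_mem_nhds (half_pos hε))] with N hN
  calc _ ≤ (((N / ∏ p ∈ S, p ^ 2 + 1) * K : ℕ) : ℝ) / N := by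
        gcongr
        exact (Nat.card_mono ((Set.finite_Icc 1 N).inter_of_right _) (hAS N)).trans
          (card_isPowerfulAt_Icc_le (fun p hp => hP p (hSP hp)) N)
    _ ≤ K / (∏ p ∈ S, p ^ 2 : ℕ) + K / N := Nat.cast_div_add_one_mul_div_le _ _ _
    _ < ε := by linarith
end

section
/- Let P be a set of primes, let p₁, ..., p_N be distinct elements of P, and let A = {n ∈ ℕ : for all p ∈ P, if p divides n then p² divides n}. Then the upper natural density of A is at most ∏_{i=1}^N (p_i² - (p_i - 1))/p_i². -/
/-!
If `p ∣ n` forces `p² ∣ n`, then `n mod p²` is either `0` or prime to `p`, so it avoids the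
`p - 1` nonzero multiples of `p` below `p²`. The moduli `p_i²` are pairwise coprime, so by the
Chinese remainder theorem an `n ≤ M` is determined by `n / ∏ p_i²` together with its residues
`n mod p_i²`. Counting the possible values gives
`|A ∩ [1, M]| ≤ (M / ∏ p_i² + 1) · ∏ (p_i² - (p_i - 1))`, and dividing by `M` gives the bound.
-/

open Filter Finset
open scoped Function

theorem Nat.modEq_prod_of_pairwise_coprime {ι : Type*} [Fintype ι] {q : ι → ℕ}
    (hq : Pairwise (Nat.Coprime on q)) {a b : ℕ} (h : ∀ i, a ≡ b [MOD q i]) :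
    a ≡ b [MOD ∏ i, q i] := by
  rw [← prod_map_toList, Nat.modEq_list_map_prod_iff
    ((nodup_toList _).pairwise_of_forall_ne fun i _ j _ hij => hq hij)]
  exact fun i _ => h i

theorem card_inter_Icc_le_of_mod_mem {ι : Type*} [Fintype ι] [DecidableEq ι] {q : ι → ℕ}
    (hq : Pairwise (Nat.Coprime on q)) (T : ι → Finset ℕ) {S : Set ℕ}
    (hS : ∀ n ∈ S, ∀ i, n % q i ∈ T i) (M : ℕ) :
    Nat.card ↥(S ∩ Set.Icc 1 M) ≤ (M / ∏ i, q i + 1) * ∏ i, #(T i) := by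
  set m := ∏ i, q i
  set t := range (M / m + 1) ×ˢ Fintype.piFinset T
  have hmaps : ∀ n ∈ S ∩ Set.Icc 1 M, (n / m, fun i => n % q i) ∈ (t : Set (ℕ × (ι → ℕ))) := by
    rintro n ⟨hnS, -, hnM⟩
    simp only [t, mem_coe, mem_product, mem_range, Fintype.mem_piFinset]
    exact ⟨Nat.lt_succ_of_le (Nat.div_le_div_right hnM), hS n hnS⟩
  have hinj : Set.InjOn (fun n => (n / m, fun i => n % q i)) (S ∩ Set.Icc 1 M) := by
    intro a _ b _ hab
    simp only [Prod.mk.injEq, funext_iff] at hab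
    have hmod : a % m = b % m := Nat.modEq_prod_of_pairwise_coprime hq hab.2
    rw [← Nat.div_add_mod a m, ← Nat.div_add_mod b m, hab.1, hmod]
  calc Nat.card ↥(S ∩ Set.Icc 1 M) ≤ (t : Set (ℕ × (ι → ℕ))).ncard :=
        Set.ncard_le_ncard_of_injOn _ hmaps hinj
    _ = (M / m + 1) * ∏ i, #(T i) := by
        rw [Set.ncard_coe_finset, card_product, card_range, Fintype.card_piFinset]

theorem limsup_div_le_of_le_mul_add {f : ℕ → ℝ} {c C : ℝ} (hf : ∀ M, 0 ≤ f M)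
    (h : ∀ M, f M ≤ c * M + C) : limsup (fun M : ℕ => f M / M) atTop ≤ c := by
  have hlim : Tendsto (fun M : ℕ => c + C / M) atTop (nhds c) := by
    simpa using tendsto_const_nhds.add (tendsto_const_div_atTop_nhds_zero_nat C)
  have hle : ∀ᶠ M : ℕ in atTop, f M / M ≤ c + C / M := by
    filter_upwards [eventually_gt_atTop 0] with M hM
    rw [div_le_iff₀ (by positivity), add_mul, div_mul_cancel₀ _ (by positivity)]
    exact h M
  have hcobdd : IsCoboundedUnder (· ≤ ·) atTop fun M : ℕ => f M / M :=
    isCoboundedUnder_le_of_le atTop fun M => div_nonneg (hf M) M.cast_nonneg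
  calc limsup (fun M : ℕ => f M / M) atTop ≤ limsup (fun M : ℕ => c + C / M) atTop :=
        limsup_le_limsup hle hcobdd hlim.isBoundedUnder_le
    _ = c := hlim.limsup_eq

def powerfulResidues (q : ℕ) : Finset ℕ := {r ∈ range (q ^ 2) | q ∣ r → r = 0}

theorem mod_sq_mem_powerfulResidues {q n : ℕ} (hq : 0 < q) (h : q ∣ n → q ^ 2 ∣ n) :
    n % q ^ 2 ∈ powerfulResidues q :=
  mem_filter.2 ⟨mem_range.2 (Nat.mod_lt _ (by positivity)), fun hdvd =>
    Nat.mod_eq_zero_of_dvd (h ((Nat.dvd_mod_iff (dvd_pow_self q two_ne_zero)).1 hdvd))⟩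

theorem card_powerfulResidues_add {q : ℕ} (hq : 0 < q) :
    #(powerfulResidues q) + (q - 1) = q ^ 2 := by
  have hmultiples : #{r ∈ range (q ^ 2) | ¬(q ∣ r → r = 0)} = q - 1 := by
    obtain ⟨k, rfl⟩ : ∃ k, q = k + 1 := ⟨q - 1, by omega⟩
    have hrange : (k + 1) ^ 2 = k * (k + 2) + 1 := by ring
    simp only [Classical.not_imp, hrange, ← ne_eq, and_comm (a := k + 1 ∣ _),
      Nat.card_multiples', Nat.add_sub_cancel]
    exact Nat.div_eq_of_lt_le (by nlinarith) (by nlinarith)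
  rw [powerfulResidues, ← hmultiples, card_filter_add_card_filter_not, card_range]

theorem upper_density_le_prod
    (P : Set ℕ) (hP : ∀ p ∈ P, Nat.Prime p)
    (N : ℕ) (p : Fin N → ℕ) (hmem : ∀ i, p i ∈ P) (hinj : Function.Injective p)
    (A : Set ℕ) (hA : A = {n : ℕ | ∀ q ∈ P, q ∣ n → q ^ 2 ∣ n}) :
    limsup (fun M : ℕ => (Nat.card ↥(A ∩ Set.Icc 1 M) : ℝ) / M) atTop
      ≤ ∏ i : Fin N, (((p i) ^ 2 - ((p i) - 1) : ℝ) / ((p i) ^ 2 : ℝ)) := by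
  have hprime (i : Fin N) : (p i).Prime := hP _ (hmem i)
  have hcop : Pairwise (Nat.Coprime on fun i => p i ^ 2) := fun i j hij =>
    Nat.Coprime.pow 2 2 <| (Nat.coprime_primes (hprime i) (hprime j)).2 (hinj.ne hij)
  have hres : ∀ n ∈ A, ∀ i, n % p i ^ 2 ∈ powerfulResidues (p i) := by
    subst hA
    exact fun n hn i => mod_sq_mem_powerfulResidues (hprime i).pos (hn _ (hmem i))
  set m := ∏ i, p i ^ 2
  set K := ∏ i, #(powerfulResidues (p i))
  have hm : (0 : ℝ) < m := Nat.cast_pos.2 (prod_pos fun i _ => pow_pos (hprime i).pos 2)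
  have hcount (M : ℕ) : (Nat.card ↥(A ∩ Set.Icc 1 M) : ℝ) ≤ K / m * M + K :=
    calc (Nat.card ↥(A ∩ Set.Icc 1 M) : ℝ) ≤ ((M / m + 1) * K : ℕ) :=
          Nat.cast_le.2 (card_inter_Icc_le_of_mod_mem hcop _ hres M)
      _ ≤ (M / m + 1) * K := by push_cast; gcongr; exact Nat.cast_div_le
      _ = K / m * M + K := by field_simp
  have hcard (i : Fin N) : (#(powerfulResidues (p i)) : ℝ) = p i ^ 2 - (p i - 1) := by
    have h := card_powerfulResidues_add (hprime i).pos
    rw [← Nat.cast_inj (R := ℝ), Nat.cast_add, Nat.cast_pred (hprime i).pos, Nat.cast_pow] at h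
    exact eq_sub_of_add_eq h
  calc limsup (fun M : ℕ => (Nat.card ↥(A ∩ Set.Icc 1 M) : ℝ) / M) atTop ≤ K / m :=
        limsup_div_le_of_le_mul_add (fun _ => Nat.cast_nonneg _) hcount
    _ = ∏ i, (((p i) ^ 2 - ((p i) - 1) : ℝ) / ((p i) ^ 2 : ℝ)) := by
        simp only [K, m, Nat.cast_prod, Nat.cast_pow, ← prod_div_distrib, hcard]
end

section
/- Let G be a finite group and H a proper subgroup. Then the cardinality of the union ⋃_{x ∈ G} xHx⁻¹ is strictly less than |G|. -/
/-!
The conjugate `xHx⁻¹` depends only on the coset `xH`, so the union is a union of at most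
`n = [G : H]` sets of size `|H|`, all containing `1`. Hence it has at most
`1 + n (|H| - 1) = |G| - n + 1` elements, which is less than `|G|` because `n ≥ 2`.
-/

open Set Pointwise

theorem Set.ncard_iUnion_add_card_le {ι α : Type*} [Finite ι] (s : ι → Set α)
    (hs : ∀ i, (s i).Finite) {a : α} (ha : ∀ i, a ∈ s i) {k : ℕ} (hk : ∀ i, (s i).ncard ≤ k) :
    (⋃ i, s i).ncard + Nat.card ι ≤ 1 + Nat.card ι * k := by
  cases nonempty_fintype ι
  have hpunctured : ∑ i, ((s i \ {a}).ncard + 1) ≤ Nat.card ι * k :=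
    calc ∑ i, ((s i \ {a}).ncard + 1) = ∑ i, (s i).ncard :=
          Finset.sum_congr rfl fun i _ => ncard_sdiff_singleton_add_one (ha i) (hs i)
      _ ≤ ∑ _i : ι, k := Finset.sum_le_sum fun i _ => hk i
      _ = Nat.card ι * k := by simp [Nat.card_eq_fintype_card]
  have hunion : (⋃ i, s i).ncard ≤ ∑ i, (s i \ {a}).ncard + 1 :=
    calc (⋃ i, s i).ncard ≤ ((⋃ i, s i) \ {a}).ncard + ({a} : Set α).ncard :=
          ncard_le_ncard_sdiff_add_ncard _ _
      _ = (⋃ i, s i \ {a}).ncard + 1 := by rw [iUnion_sdiff, ncard_singleton]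
      _ ≤ ∑ i, (s i \ {a}).ncard + 1 := by
          gcongr
          simpa using Finset.univ.set_ncard_biUnion_le fun i => s i \ {a}
  rw [Finset.sum_add_distrib, Finset.sum_const, Finset.card_univ, smul_eq_mul, mul_one,
    ← Nat.card_eq_fintype_card] at hpunctured
  omega

namespace Subgroup

variable {G : Type*} [Group G]

theorem image_conj_eq_coe_conj_smul (x : G) (H : Subgroup G) :
    (fun h => x * h * x⁻¹) '' (H : Set G) = ↑(MulAut.conj x • H) := by
  rw [coe_pointwise_smul, ← image_smul]
  rfl

theorem conj_mul_smul_eq_of_mem {H : Subgroup G} (x : G) {h : G} (hh : h ∈ H) :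
    MulAut.conj (x * h) • H = MulAut.conj x • H := by
  rw [map_mul, mul_smul, conj_smul_eq_self_of_mem hh]

theorem iUnion_conj_smul_eq_iUnion_quotient (H : Subgroup G) :
    ⋃ x : G, (↑(MulAut.conj x • H) : Set G) =
      ⋃ q : G ⧸ H, (↑(MulAut.conj q.out • H) : Set G) := by
  rw [← QuotientGroup.mk_surjective.iUnion_comp]
  congr! 3 with x
  obtain ⟨⟨h, hh⟩, hx⟩ := QuotientGroup.mk_out_eq_mul H x
  rw [hx, conj_mul_smul_eq_of_mem x hh]

theorem card_conj_smul (x : G) (H : Subgroup G) : Nat.card ↥(MulAut.conj x • H) = Nat.card H :=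
  Nat.card_congr (equivSMul _ H).toEquiv.symm

end Subgroup

theorem card_union_conjugates_lt
    (G : Type*) [Group G] [Finite G] (H : Subgroup G) (hH : H ≠ ⊤) :
    Nat.card ↥(⋃ x : G, (fun h => x * h * x⁻¹) '' (H : Set G)) < Nat.card G := by
  simp only [Subgroup.image_conj_eq_coe_conj_smul, Subgroup.iUnion_conj_smul_eq_iUnion_quotient,
    Nat.card_coe_set_eq]
  have hbound := ncard_iUnion_add_card_le (fun q : G ⧸ H => (↑(MulAut.conj q.out • H) : Set G))
    (fun _ => toFinite _) (fun _ => one_mem _)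
    (fun _ => ((Nat.card_coe_set_eq _).symm.trans (Subgroup.card_conj_smul _ H)).le)
  have hindex : 1 < H.index := H.one_lt_index_of_ne_top hH
  rw [← H.index_eq_card, H.index_mul_card] at hbound
  omega
end
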